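/- arXiv:1403.3788 — 2 statements merged into one kernel-verified Lean document; each statement's English description precedes it below -/
import Mathlib

section
/- Let N ≤ N_R be positive integers, a ∈ ℝ, and let p(t, a) = Σ_{n=0}^∞ A_n(a) Σ_{m=0}^n binom(n,m) (−1)^m t^{N+n−m−1} e^{−t}/(N+n−m−1)! for t > 0. Then for every real s < 1, the function t ↦ e^{s t} p(t, a) is integrable on (0, ∞) and ∫_0^∞ e^{s t} p(t, a) dt = (1 − s)^{−N} · ₁F₁(N; N_R; a s/(1 − s)). -/
/-!
Multiplying by `e^{st}` turns every `t^{k-1} e^{-t}/(k-1)!` in the density into the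
Erlang kernel `t^{k-1} e^{-(1-s)t}/(k-1)!`, whose integral over `(0, ∞)` is `(1-s)^{-k}`.
The inner binomial sum therefore integrates to `(1-s)^{-N} (s/(1-s))^n`, and summing against
`A_n(a)` gives the `₁F₁` series. Termwise integration is justified because `N ≤ N_R` bounds
`|A_n(a)|` by `|a|^n/n!`, so the integrals of the absolute values form a convergent
exponential series.
-/

/-- Pochhammer symbol `(x)ₙ = x (x+1) ⋯ (x+n-1)`. -/
noncomputable def poch (x : ℝ) (n : ℕ) : ℝ := ∏ i ∈ Finset.range n, (x + i)

/-- The confluent hypergeometric function `₁F₁(b; c; σ)` defined by its series. -/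
noncomputable def oneFone (b c : ℕ) (σ : ℝ) : ℝ :=
  ∑' n : ℕ, (poch b n / poch c n) * σ ^ n / (n.factorial : ℝ)

/-- `A_n(a) = ((N)_n/(N_R)_n) aⁿ/n!`. -/
noncomputable def Acoef (N NR : ℕ) (a : ℝ) (n : ℕ) : ℝ :=
  (poch N n / poch NR n) * a ^ n / (n.factorial : ℝ)

/-- The (normalized) ZF SNR density
`p(t,a) = Σ_n A_n(a) Σ_{m=0}^n C(n,m) (−1)^m t^{N+n−m−1} e^{−t}/(N+n−m−1)!`. -/
noncomputable def pdfZF (N NR : ℕ) (t a : ℝ) : ℝ :=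
  ∑' n : ℕ, Acoef N NR a n *
    ∑ m ∈ Finset.range (n + 1),
      (n.choose m : ℝ) * (-1 : ℝ) ^ m * t ^ (N + n - m - 1) * Real.exp (-t)
        / ((N + n - m - 1).factorial : ℝ)

open MeasureTheory Set Finset Real
open scoped Nat

theorem integrable_tsum_of_summable_integral_norm {α ι : Type*} [MeasurableSpace α]
    {μ : Measure α} [Countable ι] {F : ι → α → ℝ} (hF_int : ∀ i, Integrable (F i) μ)
    (hF_sum : Summable fun i ↦ ∫ a, ‖F i a‖ ∂μ) :
    Integrable (fun a ↦ ∑' i, F i a) μ := by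
  refine ⟨(AEMeasurable.tsum fun i ↦ (hF_int i).aemeasurable).aestronglyMeasurable, ?_⟩
  have h_lintegral (i : ι) : ∫⁻ a, ‖F i a‖ₑ ∂μ = ENNReal.ofReal (∫ a, ‖F i a‖ ∂μ) :=
    (ofReal_integral_norm_eq_lintegral_enorm (hF_int i)).symm
  calc ∫⁻ a, ‖∑' i, F i a‖ₑ ∂μ
      ≤ ∫⁻ a, ∑' i, ‖F i a‖ₑ ∂μ := lintegral_mono fun _ ↦ enorm_tsum_le_tsum_enorm
    _ = ∑' i, ∫⁻ a, ‖F i a‖ₑ ∂μ := lintegral_tsum fun i ↦ (hF_int i).aemeasurable.enorm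
    _ = ENNReal.ofReal (∑' i, ∫ a, ‖F i a‖ ∂μ) := by
      simp_rw [h_lintegral]
      exact (ENNReal.ofReal_tsum_of_nonneg (fun i ↦ integral_nonneg fun _ ↦ norm_nonneg _)
        hF_sum).symm
    _ < ⊤ := ENNReal.ofReal_lt_top

theorem integral_pow_mul_exp_neg_mul_Ioi (k : ℕ) {c : ℝ} (hc : 0 < c) :
    ∫ t in Ioi (0 : ℝ), t ^ k * exp (-(c * t)) = k ! / c ^ (k + 1) := by
  have key := integral_rpow_mul_exp_neg_mul_Ioi (a := k + 1) (by positivity) hc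
  simp only [add_sub_cancel_right, rpow_natCast, Gamma_nat_eq_factorial] at key
  rw [key, ← Nat.cast_succ, rpow_natCast, one_div, inv_pow, inv_mul_eq_div]

theorem integrableOn_pow_mul_exp_neg_mul_Ioi (k : ℕ) {c : ℝ} (hc : 0 < c) :
    IntegrableOn (fun t : ℝ ↦ t ^ k * exp (-(c * t))) (Ioi 0) :=
  .of_integral_ne_zero (by rw [integral_pow_mul_exp_neg_mul_Ioi k hc]; positivity)

noncomputable def erlangKernel (k : ℕ) (c t : ℝ) : ℝ :=
  t ^ (k - 1) * exp (-(c * t)) / (k - 1)!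

theorem integrableOn_erlangKernel (k : ℕ) {c : ℝ} (hc : 0 < c) :
    IntegrableOn (erlangKernel k c) (Ioi 0) :=
  (integrableOn_pow_mul_exp_neg_mul_Ioi (k - 1) hc).div_const _

theorem integral_erlangKernel {k : ℕ} (hk : 0 < k) {c : ℝ} (hc : 0 < c) :
    ∫ t in Ioi (0 : ℝ), erlangKernel k c t = (c ^ k)⁻¹ := by
  simp only [erlangKernel]
  rw [integral_div, integral_pow_mul_exp_neg_mul_Ioi _ hc, Nat.sub_add_cancel hk]
  field_simp

theorem erlangKernel_nonneg (k : ℕ) (c : ℝ) {t : ℝ} (ht : 0 ≤ t) : 0 ≤ erlangKernel k c t := by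
  unfold erlangKernel; positivity

noncomputable def erlangMix (N n : ℕ) (x c t : ℝ) : ℝ :=
  ∑ m ∈ range (n + 1), (n.choose m : ℝ) * x ^ m * erlangKernel (N + n - m) c t

theorem integrableOn_erlangMix (N n : ℕ) (x : ℝ) {c : ℝ} (hc : 0 < c) :
    IntegrableOn (erlangMix N n x c) (Ioi 0) := by
  unfold erlangMix
  exact integrable_finsetSum _ fun m _ ↦ (integrableOn_erlangKernel _ hc).const_mul _

theorem integral_erlangMix {N : ℕ} (hN : 0 < N) (n : ℕ) (x : ℝ) {c : ℝ} (hc : 0 < c) :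
    ∫ t in Ioi (0 : ℝ), erlangMix N n x c t = ((1 + x * c) / c) ^ n / c ^ N := by
  unfold erlangMix
  rw [integral_finsetSum _ fun m _ ↦ (integrableOn_erlangKernel _ hc).const_mul _]
  have h_term : ∀ m ∈ range (n + 1),
      ∫ t in Ioi (0 : ℝ), (n.choose m : ℝ) * x ^ m * erlangKernel (N + n - m) c t
        = (x * c) ^ m * 1 ^ (n - m) * n.choose m / c ^ (N + n) := by
    intro m hm
    have hmn : m ≤ n := Finset.mem_range_succ_iff.mp hm
    have h_pow : c ^ (N + n) = c ^ (N + n - m) * c ^ m := by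
      rw [← pow_add, Nat.sub_add_cancel (by omega)]
    rw [integral_const_mul, integral_erlangKernel (by omega) hc, h_pow]
    field_simp
    ring
  rw [Finset.sum_congr rfl h_term, ← Finset.sum_div, ← add_pow, div_pow, pow_add]
  field_simp
  ring

theorem abs_erlangMix_le (N n : ℕ) (x c : ℝ) {t : ℝ} (ht : 0 ≤ t) :
    |erlangMix N n x c t| ≤ erlangMix N n |x| c t := by
  unfold erlangMix
  refine (Finset.abs_sum_le_sum_abs _ _).trans (Finset.sum_le_sum fun m _ ↦ ?_)
  rw [abs_mul, abs_mul, abs_pow, Nat.abs_cast, abs_of_nonneg (erlangKernel_nonneg _ c ht)]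

theorem integral_abs_erlangMix_le {N : ℕ} (hN : 0 < N) (n : ℕ) (x : ℝ) {c : ℝ} (hc : 0 < c) :
    ∫ t in Ioi (0 : ℝ), |erlangMix N n x c t| ≤ ((1 + |x| * c) / c) ^ n / c ^ N := by
  rw [← integral_erlangMix hN n |x| hc]
  refine setIntegral_mono_on (integrableOn_erlangMix N n x hc).abs
    (integrableOn_erlangMix N n |x| hc) measurableSet_Ioi fun t ht ↦ ?_
  exact abs_erlangMix_le N n x c (le_of_lt ht)

theorem poch_nonneg {x : ℝ} (hx : 0 ≤ x) (n : ℕ) : 0 ≤ poch x n :=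
  Finset.prod_nonneg fun _ _ ↦ by positivity

theorem poch_le_poch {x y : ℝ} (hx : 0 ≤ x) (hxy : x ≤ y) (n : ℕ) : poch x n ≤ poch y n :=
  Finset.prod_le_prod (fun _ _ ↦ by positivity) fun _ _ ↦ by linarith

theorem abs_Acoef_le {N NR : ℕ} (hNNR : N ≤ NR) (a : ℝ) (n : ℕ) :
    |Acoef N NR a n| ≤ |a| ^ n / n ! := by
  have h_ratio_nonneg : 0 ≤ poch N n / poch NR n :=
    div_nonneg (poch_nonneg N.cast_nonneg n) (poch_nonneg NR.cast_nonneg n)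
  have h_ratio_le_one : poch N n / poch NR n ≤ 1 :=
    div_le_one_of_le₀ (poch_le_poch N.cast_nonneg (by exact_mod_cast hNNR) n)
      (poch_nonneg NR.cast_nonneg n)
  rw [Acoef, abs_div, abs_mul, abs_pow, abs_of_nonneg h_ratio_nonneg, Nat.abs_cast]
  gcongr
  exact mul_le_of_le_one_left (by positivity) h_ratio_le_one

theorem summable_abs_Acoef_mul_pow {N NR : ℕ} (hNNR : N ≤ NR) (a y : ℝ) :
    Summable fun n ↦ |Acoef N NR a n| * y ^ n := by
  refine (Real.summable_pow_div_factorial (|a| * |y|)).of_norm_bounded fun n ↦ ?_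
  rw [norm_mul, norm_pow, Real.norm_eq_abs, abs_abs, Real.norm_eq_abs, mul_pow, mul_div_right_comm]
  gcongr
  exact abs_Acoef_le hNNR a n

theorem exp_mul_pdfZF (N NR : ℕ) (s t a : ℝ) :
    exp (s * t) * pdfZF N NR t a = ∑' n, Acoef N NR a n * erlangMix N n (-1) (1 - s) t := by
  rw [pdfZF, ← tsum_mul_left]
  refine tsum_congr fun n ↦ ?_
  simp only [erlangMix, erlangKernel, Finset.mul_sum]
  refine Finset.sum_congr rfl fun m _ ↦ ?_
  rw [show -((1 - s) * t) = s * t + -t by ring, exp_add]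
  ring

/-- For positive integers `N ≤ N_R`, `a ∈ ℝ`, and real `s < 1`, the function
`t ↦ e^{st} p(t,a)` is integrable on `(0,∞)` and
`∫_0^∞ e^{st} p(t,a) dt = (1−s)^{−N} ₁F₁(N; N_R; as/(1−s))`. -/
theorem stmt8 (N NR : ℕ) (hN : 0 < N) (hNNR : N ≤ NR) (a s : ℝ) (hs : s < 1) :
    MeasureTheory.IntegrableOn (fun t => Real.exp (s * t) * pdfZF N NR t a)
      (Set.Ioi 0) ∧
    ∫ t in Set.Ioi (0 : ℝ), Real.exp (s * t) * pdfZF N NR t a =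
      (1 - s) ^ (-(N : ℤ)) * oneFone N NR (a * s / (1 - s)) := by
  have hc : 0 < 1 - s := sub_pos.mpr hs
  set F : ℕ → ℝ → ℝ := fun n t ↦ Acoef N NR a n * erlangMix N n (-1) (1 - s) t
  have hF_int (n : ℕ) : IntegrableOn (F n) (Ioi 0) :=
    (integrableOn_erlangMix N n (-1) hc).const_mul _
  have hF_sum : Summable fun n ↦ ∫ t in Ioi (0 : ℝ), ‖F n t‖ := by
    refine .of_nonneg_of_le (fun n ↦ integral_nonneg fun _ ↦ norm_nonneg _) (fun n ↦ ?_)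
      ((summable_abs_Acoef_mul_pow hNNR a ((1 + |-1| * (1 - s)) / (1 - s))).div_const
        ((1 - s) ^ N))
    simp only [F, norm_mul, Real.norm_eq_abs, integral_const_mul, mul_div_assoc]
    exact mul_le_mul_of_nonneg_left (integral_abs_erlangMix_le hN n (-1) hc) (abs_nonneg _)
  simp_rw [exp_mul_pdfZF]
  refine ⟨integrable_tsum_of_summable_integral_norm hF_int hF_sum, ?_⟩
  rw [← integral_tsum_of_summable_integral_norm hF_int hF_sum, oneFone, zpow_neg, zpow_natCast,
    ← tsum_mul_left]
  refine tsum_congr fun n ↦ ?_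
  rw [integral_const_mul, integral_erlangMix hN n (-1) hc, Acoef,
    show 1 + -1 * (1 - s) = s by ring]
  ring
end

section
/- Let N be a positive integer, let F : ℝ → ℝ be twice differentiable, let a ∈ ℝ with a ≠ 0, and define M(s, a) = (1 − s)^{−N} F(a s/(1 − s)) for s ≠ 1. Then for every s ≠ 1, F''(a s/(1 − s)) = ((1 − s)^{N+4}/a²) · ( ∂_s² M(s, a) − (2(N + 1)/(1 − s)) · ∂_s M(s, a) + (N(N + 1)/(1 − s)²) · M(s, a) ), where ∂_s denotes the partial derivative with respect to s. -/
/-!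
With `g s = a s / (1 - s)` we have `g' = a / (1 - s)²`, so differentiating `H (g s) / (1 - s)ⁿ`
raises the power of `1 - s` by one on the `H` term and by two on the `H'` term. Two applications
give `M''` as a combination of `F, F', F''` over `(1 - s)^(N+2), (1 - s)^(N+3), (1 - s)^(N+4)`;
the coefficients `2(N+1)` and `N(N+1)` are exactly those cancelling the `F` and `F'` terms.
-/

open Filter Topology

theorem deriv_deriv_eq_of_hasDerivAt {𝕜 E : Type*} [NontriviallyNormedField 𝕜]
    [NormedAddCommGroup E] [NormedSpace 𝕜 E] {f f' : 𝕜 → E} {f'' : E} {x : 𝕜}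
    (hf : ∀ᶠ y in 𝓝 x, HasDerivAt f (f' y) y) (hf' : HasDerivAt f' f'' x) :
    deriv (deriv f) x = f'' :=
  (EventuallyEq.deriv_eq (hf.mono fun _ hy => hy.deriv)).trans hf'.deriv

theorem hasDerivAt_mul_div_one_sub (a : ℝ) {s : ℝ} (hs : s ≠ 1) :
    HasDerivAt (fun t => a * t / (1 - t)) (a / (1 - s) ^ 2) s := by
  have hs' : 1 - s ≠ 0 := sub_ne_zero.2 hs.symm
  refine (((hasDerivAt_id' s).const_mul a).fun_div ((hasDerivAt_id' s).const_sub 1)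
    hs').congr_deriv ?_
  field_simp
  ring

theorem hasDerivAt_comp_mul_div_one_sub_div_pow {H : ℝ → ℝ} {H' s : ℝ} (a : ℝ) (n : ℕ)
    (hH : HasDerivAt H H' (a * s / (1 - s))) (hs : s ≠ 1) :
    HasDerivAt (fun t => H (a * t / (1 - t)) / (1 - t) ^ n)
      (n * (H (a * s / (1 - s)) / (1 - s) ^ (n + 1)) + a * (H' / (1 - s) ^ (n + 2))) s := by
  have hs' : 1 - s ≠ 0 := sub_ne_zero.2 hs.symm
  refine ((hH.comp s (hasDerivAt_mul_div_one_sub a hs)).fun_div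
    (((hasDerivAt_id' s).const_sub 1).fun_pow n) (pow_ne_zero n hs')).congr_deriv ?_
  rcases n with _ | n
  · simp
    ring
  · simp only [Function.comp_apply, Nat.add_sub_cancel]
    field_simp
    ring

theorem stmt16_general (N : ℕ) (F : ℝ → ℝ)
    (hF : Differentiable ℝ F) (hF' : Differentiable ℝ (deriv F))
    (a : ℝ) (ha : a ≠ 0) (M : ℝ → ℝ → ℝ)
    (hM : ∀ s a' : ℝ, M s a' = (1 - s) ^ (-(N : ℤ)) * F (a' * s / (1 - s))) :
    ∀ s : ℝ, s ≠ 1 →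
      deriv (deriv F) (a * s / (1 - s)) =
        ((1 - s) ^ (N + 4) / a ^ 2) *
          (deriv (deriv (fun s' => M s' a)) s
            - (2 * ((N : ℝ) + 1) / (1 - s)) * deriv (fun s' => M s' a) s
            + ((N : ℝ) * ((N : ℝ) + 1) / (1 - s) ^ 2) * M s a) := by
  intro s hs
  have hM_div : ∀ t, M t a = F (a * t / (1 - t)) / (1 - t) ^ N := fun t => by
    rw [hM, zpow_neg, zpow_natCast, inv_mul_eq_div]
  set φ : ℝ → ℝ := fun t =>
    N * (F (a * t / (1 - t)) / (1 - t) ^ (N + 1))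
      + a * (deriv F (a * t / (1 - t)) / (1 - t) ^ (N + 2))
  have hM' : ∀ t, t ≠ 1 → HasDerivAt (fun t => M t a) (φ t) t := fun t ht => by
    simpa only [hM_div] using
      hasDerivAt_comp_mul_div_one_sub_div_pow a N (hF _).hasDerivAt ht
  have hφ : HasDerivAt φ _ s :=
    ((hasDerivAt_comp_mul_div_one_sub_div_pow a (N + 1) (hF _).hasDerivAt hs).const_mul _).add
      ((hasDerivAt_comp_mul_div_one_sub_div_pow a (N + 2) (hF' _).hasDerivAt hs).const_mul a)
  have hs' : 1 - s ≠ 0 := sub_ne_zero.2 hs.symm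
  rw [deriv_deriv_eq_of_hasDerivAt (eventually_ne_nhds hs |>.mono hM') hφ, (hM' s hs).deriv,
    hM_div]
  simp only [φ]
  push_cast
  field_simp
  ring

/-- For `M(s,a) = (1−s)^{−N} F(as/(1−s))` with `F` twice differentiable and `a ≠ 0`:
`F''(as/(1−s)) = ((1−s)^{N+4}/a²) (∂_s² M − (2(N+1)/(1−s)) ∂_s M + (N(N+1)/(1−s)²) M)`
for every `s ≠ 1`. -/
theorem stmt16 (N : ℕ) (hN : 0 < N) (F : ℝ → ℝ)
    (hF : Differentiable ℝ F) (hF' : Differentiable ℝ (deriv F))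
    (a : ℝ) (ha : a ≠ 0) (M : ℝ → ℝ → ℝ)
    (hM : ∀ s a' : ℝ, M s a' = (1 - s) ^ (-(N : ℤ)) * F (a' * s / (1 - s))) :
    ∀ s : ℝ, s ≠ 1 →
      deriv (deriv F) (a * s / (1 - s)) =
        ((1 - s) ^ (N + 4) / a ^ 2) *
          (deriv (deriv (fun s' => M s' a)) s
            - (2 * ((N : ℝ) + 1) / (1 - s)) * deriv (fun s' => M s' a) s
            + ((N : ℝ) * ((N : ℝ) + 1) / (1 - s) ^ 2) * M s a) :=
  stmt16_general N F hF hF' a ha M hM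
end
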